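/- On the secondary Hochschild chain complex C_n(A,B,ε) = A^{⊗(n+1)} ⊗ B^{⊗ n(n+1)/2}, the identity (1 − λ) ∘ b'_n = b_n ∘ (1 − λ) holds, where b is the full differential, b' is the truncated differential (omitting the last cyclic term), and λ is the signed cyclic operator. Hence b descends to a well-defined differential on the quotient C_n^λ(A,B,ε) = C_n(A,B,ε)/Im(1 − λ). -/

import Mathlib

open scoped TensorProduct
open MulOpposite PiTensorProduct

noncomputable section

/-- Index set for the strictly upper triangular positions of an `m × m` matrix. -/
abbrev UT (m : ℕ) := {p : Fin m × Fin m // p.1 < p.2}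

/-- The tensor space `A^{⊗ m} ⊗ B^{⊗ m(m-1)/2}` in its matrix representation. -/
def TS (k A B : Type) [Field k] [Ring A] [Algebra k A] [CommRing B] [Algebra k B]
    (m : ℕ) : Type :=
  (⨂[k] _ : Fin m, A) ⊗[k] (⨂[k] _ : UT m, B)

variable (k A B : Type) [Field k] [Ring A] [Algebra k A] [CommRing B] [Algebra k B]

instance (m : ℕ) : AddCommGroup (TS k A B m) :=
  inferInstanceAs (AddCommGroup ((⨂[k] _ : Fin m, A) ⊗[k] (⨂[k] _ : UT m, B)))

instance (m : ℕ) : Module k (TS k A B m) :=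
  inferInstanceAs (Module k ((⨂[k] _ : Fin m, A) ⊗[k] (⨂[k] _ : UT m, B)))

/-- The secondary Hochschild cochain space `C^n(A,B,ε) = Hom_k(A^{⊗(n+1)} ⊗ B^{⊗ n(n+1)/2}, k)`. -/
abbrev Cc (n : ℕ) : Type := TS k A B (n + 1) →ₗ[k] k

/-- The pure tensor (generator) determined by diagonal entries `a` and
upper-triangular entries `β` (read at indices `< m`). -/
def gen (m : ℕ) (a : ℕ → A) (β : ℕ → ℕ → B) : TS k A B m :=
  (tprod k fun i : Fin m => a i) ⊗ₜ[k] (tprod k fun p : UT m => β p.1.1 p.1.2)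

/-- Diagonal of the matrix obtained by merging diagonal entries `i`, `i+1` via
`a_i a_{i+1} ε(b_{i,i+1})`. -/
def mergeA (ε : B →ₐ[k] A) (i : ℕ) (a : ℕ → A) (β : ℕ → ℕ → B) : ℕ → A :=
  fun j => if j < i then a j else if j = i then a i * a (i + 1) * ε (β i (i + 1)) else a (j + 1)

/-- Preimages of the index `p` under the monotone surjection collapsing `i` and `i+1`. -/
def preim (i p : ℕ) : Finset ℕ :=
  if p < i then {p} else if p = i then {i, i + 1} else {p + 1}

/-- `B`-entries of the matrix obtained by merging rows/columns `i` and `i+1`. -/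
def mergeB (i : ℕ) (β : ℕ → ℕ → B) : ℕ → ℕ → B :=
  fun p q => ∏ u ∈ preim i p, ∏ v ∈ preim i q, β u v

/-- Diagonal of the "cyclic merge": `a_m a_0 ε(b_{0,m})` in position `0`
(top index `m`). -/
def cmergeA (ε : B →ₐ[k] A) (m : ℕ) (a : ℕ → A) (β : ℕ → ℕ → B) : ℕ → A :=
  fun j => if j = 0 then a m * a 0 * ε (β 0 m) else a j

/-- `B`-entries of the cyclic merge: first row becomes `b_{q,m} b_{0,q}`. -/
def cmergeB (m : ℕ) (β : ℕ → ℕ → B) : ℕ → ℕ → B :=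
  fun p q => if p = 0 then β q m * β 0 q else β p q

/-- Diagonal of the cyclically rotated matrix: `a_n` moves to position `0`. -/
def rotA (n : ℕ) (a : ℕ → A) : ℕ → A :=
  fun j => if j = 0 then a n else a (j - 1)

/-- `B`-entries of the cyclically rotated matrix: the first row becomes
`b_{0,n}, …, b_{n-1,n}`. -/
def rotB (n : ℕ) (β : ℕ → ℕ → B) : ℕ → ℕ → B :=
  fun p q => if p = 0 then β (q - 1) n else β (p - 1) (q - 1)

/-!
Write `dᵢ` for the faces merging entries `i, i+1`, `d_c` for the cyclic merge and `t` for the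
unsigned rotation, so that `λ = (-1)ⁿ t` on `Cₙ`. The three face relations `d₀ t = d_c`,
`dᵢ₊₁ t = t dᵢ` (for `i < n`) and `d_c t = t dₙ` give `b (t x) = d_c x - t (b' x)`, and
comparing signs yields `b - b λ = b' - λ b'`. Then
`b (im (1 - λ)) = im (b (1 - λ)) = im ((1 - λ) b') ⊆ im (1 - λ)`.
-/

theorem gen_ext {M : Type*} [AddCommGroup M] [Module k M] {m : ℕ} {f g : TS k A B m →ₗ[k] M}
    (h : ∀ a β, f (gen k A B m a β) = g (gen k A B m a β)) : f = g := by
  refine TensorProduct.ext (PiTensorProduct.ext (MultilinearMap.ext fun u => ?_))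
  refine PiTensorProduct.ext (MultilinearMap.ext fun v => ?_)
  obtain ⟨a, rfl⟩ := Fin.val_injective.surjective_comp_right u
  have hUT : Function.Injective fun p : UT m => ((p.1.1 : ℕ), (p.1.2 : ℕ)) := fun p q h =>
    Subtype.ext (Prod.ext (Fin.ext (congrArg Prod.fst h)) (Fin.ext (congrArg Prod.snd h)))
  obtain ⟨β, rfl⟩ := hUT.surjective_comp_right v
  exact h a (Function.curry β)

theorem gen_congr (m : ℕ) {a a' : ℕ → A} {β β' : ℕ → ℕ → B}
    (ha : ∀ j < m, a j = a' j) (hβ : ∀ p q, p < q → q < m → β p q = β' p q) :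
    gen k A B m a β = gen k A B m a' β' := by
  unfold gen
  congr 2
  · exact funext fun i => ha i i.isLt
  · exact funext fun p => hβ _ _ p.2 p.1.2.isLt

theorem prod_preim (i p : ℕ) (f : ℕ → B) :
    ∏ u ∈ preim i p, f u =
      if p < i then f p else if p = i then f i * f (i + 1) else f (p + 1) := by
  unfold preim
  split_ifs
  · simp
  · exact Finset.prod_pair (by omega)
  · simp

theorem gen_merge_zero_rot (ε : B →ₐ[k] A) (n : ℕ) (a : ℕ → A) (β : ℕ → ℕ → B) :
    gen k A B (n + 1) (mergeA k A B ε 0 (rotA A (n + 1) a) (rotB B (n + 1) β))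
      (mergeB B 0 (rotB B (n + 1) β)) =
    gen k A B (n + 1) (cmergeA k A B ε (n + 1) a β) (cmergeB B (n + 1) β) := by
  apply gen_congr
  · intro j _
    simp only [mergeA, rotA, rotB, cmergeA]
    grind
  · intro p q _ _
    simp only [mergeB, prod_preim, rotB, cmergeB]
    grind

theorem gen_merge_succ_rot (ε : B →ₐ[k] A) {n i : ℕ} (hi : i < n) (a : ℕ → A)
    (β : ℕ → ℕ → B) :
    gen k A B (n + 1) (mergeA k A B ε (i + 1) (rotA A (n + 1) a) (rotB B (n + 1) β))
      (mergeB B (i + 1) (rotB B (n + 1) β)) =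
    gen k A B (n + 1) (rotA A n (mergeA k A B ε i a β)) (rotB B n (mergeB B i β)) := by
  apply gen_congr
  · intro j _
    simp only [mergeA, rotA, rotB]
    grind
  · intro p q _ _
    simp only [mergeB, prod_preim, rotB]
    grind

theorem gen_cmerge_rot (ε : B →ₐ[k] A) (n : ℕ) (a : ℕ → A) (β : ℕ → ℕ → B) :
    gen k A B (n + 1) (cmergeA k A B ε (n + 1) (rotA A (n + 1) a) (rotB B (n + 1) β))
      (cmergeB B (n + 1) (rotB B (n + 1) β)) =
    gen k A B (n + 1) (rotA A n (mergeA k A B ε n a β)) (rotB B n (mergeB B n β)) := by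
  apply gen_congr
  · intro j _
    simp only [mergeA, rotA, rotB, cmergeA]
    grind
  · intro p q _ _
    simp only [mergeB, prod_preim, rotB, cmergeB]
    grind

theorem alternating_sum_shift {M : Type*} [AddCommGroup M] (n : ℕ) {e r : ℕ → M} {c c' : M}
    (h0 : e 0 = c) (hsucc : ∀ i < n, e (i + 1) = r i) (hlast : c' = r n) :
    ∑ i ∈ Finset.range (n + 1), (-1 : ℤ) ^ i • e i + (-1 : ℤ) ^ (n + 1) • c' =
      c - ∑ i ∈ Finset.range (n + 1), (-1 : ℤ) ^ i • r i := by
  rw [Finset.sum_range_succ', Finset.sum_range_succ _ n, h0, hlast,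
    Finset.sum_congr rfl fun i hi => by rw [hsucc i (Finset.mem_range.mp hi)]]
  simp only [pow_succ, mul_neg_one, neg_smul, pow_zero, one_smul, Finset.sum_neg_distrib]
  abel

theorem LinearMap.map_range_le_range_of_comp_eq {R M M' N N' : Type*} [Semiring R]
    [AddCommMonoid M] [AddCommMonoid M'] [AddCommMonoid N] [AddCommMonoid N']
    [Module R M] [Module R M'] [Module R N] [Module R N']
    {f : M →ₗ[R] N} {g : M' →ₗ[R] M} {h : N' →ₗ[R] N} {l : M' →ₗ[R] N'}
    (H : f ∘ₗ g = h ∘ₗ l) : (LinearMap.range g).map f ≤ LinearMap.range h := by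
  rw [← LinearMap.range_comp, H]
  exact LinearMap.range_comp_le_range l h

theorem secondary_cyclic_chains_descend
    (ε : B →ₐ[k] A)
    (lamC : ∀ n : ℕ, Module.End k (TS k A B (n + 1)))
    (hlam : ∀ (n : ℕ) (a : ℕ → A) (β : ℕ → ℕ → B),
      lamC n (gen k A B (n + 1) a β) =
        (-1 : ℤ) ^ n • gen k A B (n + 1) (rotA A n a) (rotB B n β))
    (bC : ∀ n : ℕ, TS k A B (n + 2) →ₗ[k] TS k A B (n + 1))
    (hb : ∀ (n : ℕ) (a : ℕ → A) (β : ℕ → ℕ → B),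
      bC n (gen k A B (n + 2) a β) =
        (∑ i ∈ Finset.range (n + 1), (-1 : ℤ) ^ i •
            gen k A B (n + 1) (mergeA k A B ε i a β) (mergeB B i β))
        + (-1 : ℤ) ^ (n + 1) •
            gen k A B (n + 1) (cmergeA k A B ε (n + 1) a β) (cmergeB B (n + 1) β))
    (btrC : ∀ n : ℕ, TS k A B (n + 2) →ₗ[k] TS k A B (n + 1))
    (hbtr : ∀ (n : ℕ) (a : ℕ → A) (β : ℕ → ℕ → B),
      btrC n (gen k A B (n + 2) a β) =
        ∑ i ∈ Finset.range (n + 1), (-1 : ℤ) ^ i •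
            gen k A B (n + 1) (mergeA k A B ε i a β) (mergeB B i β)) :
    (∀ (n : ℕ) (x : TS k A B (n + 2)),
        btrC n x - lamC n (btrC n x) = bC n x - bC n (lamC (n + 1) x)) ∧
    (∀ n : ℕ,
      Submodule.map (bC n) (LinearMap.range (1 - lamC (n + 1))) ≤
        LinearMap.range (1 - lamC n)) := by
  have key : ∀ n, (1 - lamC n) ∘ₗ btrC n = bC n ∘ₗ (1 - lamC (n + 1)) := by
    intro n
    refine gen_ext k A B fun a β => ?_
    have hbrot : bC n (gen k A B (n + 2) (rotA A (n + 1) a) (rotB B (n + 1) β)) =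
        gen k A B (n + 1) (cmergeA k A B ε (n + 1) a β) (cmergeB B (n + 1) β) -
          ∑ i ∈ Finset.range (n + 1), (-1 : ℤ) ^ i •
            gen k A B (n + 1) (rotA A n (mergeA k A B ε i a β)) (rotB B n (mergeB B i β)) := by
      rw [hb]
      exact alternating_sum_shift n (gen_merge_zero_rot k A B ε n a β)
        (fun i hi => gen_merge_succ_rot k A B ε hi a β) (gen_cmerge_rot k A B ε n a β)
    simp only [LinearMap.comp_apply, LinearMap.sub_apply, Module.End.one_apply, map_sub,
      map_zsmul, hbtr, hlam, hbrot, map_sum]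
    rw [hb]
    simp only [smul_sub, Finset.sum_sub_distrib, smul_comm _ ((-1 : ℤ) ^ n), ← Finset.smul_sum]
    module
  exact ⟨fun n x => by simpa using LinearMap.congr_fun (key n) x,
    fun n => LinearMap.map_range_le_range_of_comp_eq (key n).symm⟩

end
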